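/- Let n = 2m+1 be a positive odd integer and let R = ℂ[α,δ₁,…,δ_n]/(δ₁²,…,δ_n²). For a subset J ⊆ {1,…,n}, let τ_J denote the ring automorphism fixing ω := α + (δ₁+⋯+δ_n)/2 and δ_i for i ∉ J, and sending δ_i to −δ_i for i ∈ J. If s ≥ m, then the elements τ_J(α^s) for all J ⊆ {1,…,n} with |J| even span a subspace of R of dimension at least 2^{n−1}; consequently, the images of α^s under the even flip symmetries are linearly independent in R (there being exactly 2^{n−1} even flip symmetries). -/

import Mathlib

/-!
STATEMENT 9: Let `n = 2m+1` and `R = ℂ[α,δ₁,…,δ_n]/(δ₁²,…,δ_n²)`.  For a subset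
`J ⊆ {1,…,n}` let `τ_J` be the algebra automorphism fixing `ω = α + (δ₁+⋯+δ_n)/2`
and `δ_i` for `i ∉ J`, and sending `δ_i ↦ −δ_i` for `i ∈ J` (equivalently, on the
polynomial ring, `α ↦ α + Σ_{i∈J} δ_i`, `δ_i ↦ ±δ_i`).  If `s ≥ m`, then the images
in `R` of `τ_J(α^s)` for the `2^{n−1}` subsets `J` with `|J|` even are linearly
independent over `ℂ` (hence span a subspace of dimension at least `2^{n−1}`).
Variables: `X none = α`, `X (some i) = δ_i` in `MvPolynomial (Option (Fin n)) ℂ`.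
-/

open MvPolynomial

/-- The flip symmetry `τ_J` on the polynomial ring `ℂ[α,δ₁,…,δ_n]`:
it fixes `ω = α + (Σ δ_i)/2` and negates `δ_i` exactly for `i ∈ J`. -/
noncomputable def Stmt9.tau {n : ℕ} (J : Finset (Fin n)) :
    MvPolynomial (Option (Fin n)) ℂ →ₐ[ℂ] MvPolynomial (Option (Fin n)) ℂ :=
  MvPolynomial.aeval fun v =>
    match v with
    | none => X none + ∑ j ∈ J, X (some j)
    | some i => if i ∈ J then -X (some i) else X (some i)

/-- The ideal `(δ₁²,…,δ_n²)`. -/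
noncomputable def Stmt9.sqIdeal (n : ℕ) : Ideal (MvPolynomial (Option (Fin n)) ℂ) :=
  Ideal.span (Set.range fun i : Fin n => (X (some i) : MvPolynomial (Option (Fin n)) ℂ) ^ 2)

/-!
Write `L_J = τ_J(α) = α + Σ_{j ∈ J} δ_j`. With `∂_I = Π_{i ∈ I} ∂/∂δ_i`, the functional
`p ↦ (∂_I p)(α = 1, δ = 0)` kills the ideal `(δ_i²)` (each `δ_i` is differentiated at most once)
and sends `L_J^s` to `s!/(s - |I|)!` if `I ⊆ J`, to `0` otherwise. Hence a relation
`Σ_J a_J τ_J(α^s) = 0` in `R` forces `Σ_{J ⊇ A} a_J = 0` for every `|A| ≤ m ≤ s`.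

It remains to see that a function `g` on the subsets of an `n`-set, `n ≤ 2m + 1`, supported on
even sets and with vanishing upper sums `Σ_{J ⊇ A} g J` for `|A| ≤ m`, is zero. Its Walsh transform
`F S = Σ_J (-1)^|S ∩ J| g J = Σ_{A ⊆ S} (-2)^|A| Σ_{J ⊇ A} g J` vanishes when `|S| ≤ m`, and
`F Sᶜ = F S` since `g` lives on even sets; as `|S| ≤ m` or `|Sᶜ| ≤ m`, `F = 0`. Möbius inversion,
once downwards and once upwards, then gives `g = 0`.
-/

open Finset

namespace MvPolynomial

variable {σ R : Type*} [CommRing R]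

theorem pderiv_comm (i j : σ) (p : MvPolynomial σ R) :
    pderiv i (pderiv j p) = pderiv j (pderiv i p) := by
  classical
  have h : ⁅pderiv i, pderiv j⁆ = (0 : Derivation R (MvPolynomial σ R) (MvPolynomial σ R)) :=
    derivation_ext fun k => by
      rw [Derivation.commutator_apply]
      simp [pderiv_X, Pi.single_apply, apply_ite (pderiv _)]
  have := DFunLike.congr_fun h p
  rwa [Derivation.commutator_apply, Derivation.zero_apply, sub_eq_zero] at this

theorem pderiv_mem_span_X_pow_of_ne {i j : σ} (h : j ≠ i) {k : ℕ} {p : MvPolynomial σ R}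
    (hp : p ∈ Ideal.span {X j ^ k}) : pderiv i p ∈ Ideal.span {X j ^ k} := by
  obtain ⟨q, rfl⟩ := Ideal.mem_span_singleton'.1 hp
  rw [pderiv_mul, pderiv_pow, pderiv_X_of_ne h, mul_zero, mul_zero, add_zero]
  exact Ideal.mul_mem_left _ _ (Ideal.mem_span_singleton_self _)

theorem pderiv_mem_span_X_pow_self {j : σ} {k : ℕ} {p : MvPolynomial σ R}
    (hp : p ∈ Ideal.span {X j ^ (k + 1)}) : pderiv j p ∈ Ideal.span {X j ^ k} := by
  obtain ⟨q, rfl⟩ := Ideal.mem_span_singleton'.1 hp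
  refine Ideal.mem_span_singleton'.2 ⟨pderiv j q * X j + q * ((k : MvPolynomial σ R) + 1), ?_⟩
  rw [pderiv_mul, pderiv_pow, pderiv_X_self]
  push_cast
  ring

noncomputable def mixedPDeriv (I : Finset σ) : Module.End R (MvPolynomial σ R) :=
  I.noncommProd (fun i => (pderiv i).toLinearMap)
    fun i _ j _ _ => LinearMap.ext (pderiv_comm i j)

@[simp] theorem mixedPDeriv_empty (p : MvPolynomial σ R) : mixedPDeriv ∅ p = p := rfl

variable [DecidableEq σ]

theorem mixedPDeriv_insert {i : σ} {I : Finset σ} (h : i ∉ I) (p : MvPolynomial σ R) :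
    mixedPDeriv (insert i I) p = pderiv i (mixedPDeriv I p) :=
  LinearMap.congr_fun (noncommProd_insert_of_notMem _ _ _ _ h) p

theorem mixedPDeriv_mem_span_X_pow {j : σ} {k : ℕ} {p : MvPolynomial σ R}
    (hp : p ∈ Ideal.span {X j ^ (k + 1)}) (I : Finset σ) :
    mixedPDeriv I p ∈ Ideal.span {X j ^ k} := by
  suffices mixedPDeriv I p ∈ Ideal.span {X j ^ (if j ∈ I then k else k + 1)} by
    split_ifs at this
    · exact this
    · exact Ideal.span_singleton_le_span_singleton.2 (pow_dvd_pow _ k.le_succ) this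
  induction I using Finset.induction_on with
  | empty => simpa using hp
  | @insert i I hi ih =>
    rw [mixedPDeriv_insert hi]
    rcases eq_or_ne j i with rfl | hji
    · rw [if_neg hi] at ih
      simpa using pderiv_mem_span_X_pow_self ih
    · simpa [hji] using pderiv_mem_span_X_pow_of_ne hji ih

theorem mixedPDeriv_sum_X_pow (I T : Finset σ) (s : ℕ) :
    mixedPDeriv I ((∑ v ∈ T, X v : MvPolynomial σ R) ^ s) =
      if I ⊆ T then s.descFactorial #I • (∑ v ∈ T, X v) ^ (s - #I) else 0 := by
  induction I using Finset.induction_on with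
  | empty => simp
  | @insert i I hi ih =>
    rw [mixedPDeriv_insert hi, ih, card_insert_of_notMem hi]
    by_cases hI : I ⊆ T
    · by_cases hiT : i ∈ T
      · simp [hI, hiT, insert_subset_iff, Nat.descFactorial_succ, Nat.sub_sub]
        ring
      · simp [hI, hiT, insert_subset_iff]
    · simp [hI, insert_subset_iff]

end MvPolynomial

namespace Finset

variable {α R : Type*} [Fintype α] [DecidableEq α] [CommRing R]

def walshTransform (g : Finset α → R) (S : Finset α) : R :=
  ∑ J, (-1) ^ #(S ∩ J) * g J

theorem walshTransform_eq_sum_Iic (g : Finset α → R) (S : Finset α) :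
    walshTransform g S = ∑ A ∈ Iic S, (-2) ^ #A * ∑ J ∈ Ici A, g J := by
  simp_rw [Iic_eq_powerset, mul_sum]
  rw [sum_comm' (t' := univ) (s' := fun J => (S ∩ J).powerset)]
  · refine sum_congr rfl fun J _ => ?_
    rw [← sum_mul]
    congr 1
    have := sum_pow_mul_eq_add_pow (-2 : R) 1 (S ∩ J)
    simp only [one_pow, mul_one] at this
    rw [this]
    norm_num
  · intro A J
    simp only [mem_powerset, mem_Ici, mem_univ, subset_inter_iff, and_true]

theorem walshTransform_compl {g : Finset α → R} (heven : ∀ J, g J ≠ 0 → Even #J)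
    (S : Finset α) : walshTransform g Sᶜ = walshTransform g S := by
  refine sum_congr rfl fun J _ => ?_
  rcases eq_or_ne (g J) 0 with h | h
  · simp [h]
  · have hJ : Even (#(J \ S) + #(J ∩ S)) := card_sdiff_add_card_inter J S ▸ heven J h
    rw [inter_comm, ← sdiff_eq_inter_compl, inter_comm, neg_one_pow_congr (Nat.even_add.1 hJ)]

theorem eq_zero_of_even_of_sum_Ici_eq_zero [NoZeroDivisors R] [NeZero (2 : R)] {m : ℕ}
    (hcard : Fintype.card α ≤ 2 * m + 1) {g : Finset α → R} (heven : ∀ J, g J ≠ 0 → Even #J)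
    (hU : ∀ A : Finset α, #A ≤ m → ∑ J ∈ Ici A, g J = 0) : g = 0 := by
  have hsmall (S : Finset α) (hS : #S ≤ m) : walshTransform g S = 0 := by
    rw [walshTransform_eq_sum_Iic]
    exact sum_eq_zero fun A hA => by
      rw [hU A ((card_le_card (mem_Iic.1 hA)).trans hS), mul_zero]
  have hzero (S : Finset α) : ∑ A ∈ Iic S, (-2) ^ #A * ∑ J ∈ Ici A, g J = 0 := by
    rw [← walshTransform_eq_sum_Iic]
    rcases le_or_gt #S m with h | h
    · exact hsmall S h
    · rw [← walshTransform_compl heven]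
      exact hsmall Sᶜ (by rw [card_compl]; omega)
  have hU_zero (A : Finset α) : ∑ J ∈ Ici A, g J = 0 := by
    have := IncidenceAlgebra.moebius_inversion_bot _ 0 (fun S => (hzero S).symm) A
    simp only [Pi.zero_apply, mul_zero, sum_const_zero, mul_eq_zero] at this
    exact this.resolve_left (pow_ne_zero _ (neg_ne_zero.2 two_ne_zero))
  funext J
  simpa using IncidenceAlgebra.moebius_inversion_top g 0 (fun A => (hU_zero A).symm) J

end Finset

namespace Stmt9

variable {n : ℕ}

theorem tau_X_none_pow (J : Finset (Fin n)) (s : ℕ) :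
    tau J (X none ^ s) = (∑ v ∈ insert none (J.map .some), X v) ^ s := by
  rw [map_pow, tau, aeval_X, sum_insert (by simp), sum_map]
  rfl

theorem eval_mixedPDeriv_eq_zero_of_mem_sqIdeal (I : Finset (Option (Fin n)))
    {p : MvPolynomial (Option (Fin n)) ℂ} (hp : p ∈ sqIdeal n) :
    eval (fun v => v.elim 1 0) (mixedPDeriv I p) = 0 := by
  obtain ⟨c, rfl⟩ := Ideal.mem_span_range_iff_exists_fun.1 hp
  rw [map_sum, map_sum]
  refine sum_eq_zero fun i _ => ?_
  obtain ⟨q, hq⟩ := Ideal.mem_span_singleton'.1 <| mixedPDeriv_mem_span_X_pow (k := 1)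
    (p := c i * X (some i) ^ 2) (Ideal.mul_mem_left _ _ (Ideal.mem_span_singleton_self _)) I
  simp [← hq]

theorem eval_mixedPDeriv_tau_X_none_pow (I J : Finset (Fin n)) (s : ℕ) :
    eval (fun v => v.elim 1 0) (mixedPDeriv (I.map .some) (tau J (X none ^ s))) =
      if I ⊆ J then (s.descFactorial #I : ℂ) else 0 := by
  have hsub : I.map .some ⊆ insert none (J.map .some) ↔ I ⊆ J := by
    rw [subset_insert_iff_of_notMem (by simp), map_subset_map]
  rw [tau_X_none_pow, mixedPDeriv_sum_X_pow]
  simp [hsub, apply_ite (eval _)]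

theorem sum_Ici_eq_zero_of_sum_smul_tau_mem_sqIdeal {s : ℕ} {a : Finset (Fin n) → ℂ}
    (ha : ∑ J, a J • tau J (X none ^ s) ∈ sqIdeal n) {A : Finset (Fin n)} (hA : #A ≤ s) :
    ∑ J ∈ Ici A, a J = 0 := by
  have h := eval_mixedPDeriv_eq_zero_of_mem_sqIdeal (A.map .some) ha
  simp only [map_sum, map_smul, smul_eval, eval_mixedPDeriv_tau_X_none_pow, mul_ite,
    mul_zero] at h
  rw [← sum_filter, ← sum_mul, filter_le_eq_Ici] at h
  have hd : (s.descFactorial #A : ℂ) ≠ 0 :=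
    Nat.cast_ne_zero.2 fun h0 => (Nat.descFactorial_eq_zero_iff_lt.1 h0).not_ge hA
  exact (mul_eq_zero.1 h).resolve_right hd

end Stmt9

open Stmt9 in
theorem stmt9 (m n : ℕ) (hn : n = 2 * m + 1) (s : ℕ) (hs : m ≤ s) :
    LinearIndependent ℂ
      (fun J : {J : Finset (Fin n) // Even J.card} =>
        Ideal.Quotient.mk (sqIdeal n)
          (tau J.1 ((X none : MvPolynomial (Option (Fin n)) ℂ) ^ s))) := by
  change LinearIndepOn ℂ (fun J => Ideal.Quotient.mk (sqIdeal n) (tau J (X none ^ s)))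
    {J | Even J.card}
  rw [linearIndepOn_iff]
  intro l hl hcomb
  have hmem : ∑ J, l J • tau J (X none ^ s) ∈ sqIdeal n := by
    rw [← Ideal.Quotient.eq_zero_iff_mem, ← hcomb, Finsupp.linearCombination_apply,
      Finsupp.sum_fintype _ _ (by simp), ← Ideal.Quotient.mkₐ_eq_mk ℂ, map_sum]
    simp_rw [map_smul]
  exact DFunLike.coe_injective <| eq_zero_of_even_of_sum_Ici_eq_zero (m := m) (by simp [hn])
    (fun J hJ => hl (Finsupp.mem_support_iff.2 hJ))
    fun A hA => sum_Ici_eq_zero_of_sum_smul_tau_mem_sqIdeal hmem (hA.trans hs)
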